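/- The rank-one spherical mean measures are probability measures: for the rank-one Dunkl convolution measures μ^k_{x,t} (k > 0, x ∈ ℝ, t > 0) given by dμ^k_{x,t}(z) = m_{k−1/2}(|x|,|t|,|z|)|z|^{2k} · (1 − σ_{x,t,z} + σ_{z,x,t} + σ_{z,t,x})/2 dz, where σ_{z,x,t} = (z² + x² − t²)/(2zx) for z,x ≠ 0 and 0 otherwise, the symmetrization σ^k_{x,t} = (μ^k_{x,t} + μ^k_{x,−t})/2 is a probability measure on ℝ. -/

import Mathlib

open MeasureTheory intervalIntegral Set

set_option maxHeartbeats 1000000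

/-- Gegenbauer's kernel `m_α(x,y,z)` for the Bessel product formula (with the indicator
of `[|x−y|, x+y]` built in). -/
noncomputable def besselProdKernel (α x y : ℝ) (z : ℝ) : ℝ :=
  Set.indicator (Set.Icc |x - y| (x + y))
    (fun z => 2 ^ (1 - 2 * α) * Real.Gamma (α + 1) /
        (Real.sqrt Real.pi * Real.Gamma (α + 1/2)) *
        ((z ^ 2 - (x - y) ^ 2) * ((x + y) ^ 2 - z ^ 2)) ^ (α - 1/2) /
        (x * y * z) ^ (2 * α)) z

/-- `σ_{z,x,t} = (z² + x² − t²)/(2zx)` for `z, x ≠ 0`, and `0` otherwise. -/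
noncomputable def sigCoeff (z x t : ℝ) : ℝ :=
  if z ≠ 0 ∧ x ≠ 0 then (z ^ 2 + x ^ 2 - t ^ 2) / (2 * z * x) else 0

/-- The density of the rank-one Dunkl convolution measure `μ^k_{x,t}`:
`m_{k−1/2}(|x|,|t|,|z|)|z|^{2k} (1 − σ_{x,t,z} + σ_{z,x,t} + σ_{z,t,x})/2`. -/
noncomputable def rankOneDens (k x t : ℝ) (z : ℝ) : ℝ :=
  besselProdKernel (k - 1/2) |x| |t| |z| * |z| ^ (2 * k) *
    ((1 - sigCoeff x t z + sigCoeff z x t + sigCoeff z t x) / 2)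

/-- The density of the symmetrization `σ^k_{x,t} = (μ^k_{x,t} + μ^k_{x,−t})/2`. -/
noncomputable def rankOneSphMeanDens (k x t : ℝ) (z : ℝ) : ℝ :=
  (rankOneDens k x t z + rankOneDens k x (-t) z) / 2

lemma betaInt (k : ℝ) (hk : 0 < k) :
    IntervalIntegrable (fun u : ℝ => u ^ (k-1) * (1-u) ^ (k-1)) volume 0 1 ∧
    ∫ u in (0:ℝ)..1, u ^ (k-1) * (1-u) ^ (k-1)
      = Real.Gamma k * Real.Gamma k / Real.Gamma (2*k) := by
  have hk1 : (-1 : ℝ) < k - 1 := by linarith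
  have hint : IntervalIntegrable (fun u : ℝ => u ^ (k-1) * (1-u) ^ (k-1)) volume 0 1 := by
    have h1 : IntervalIntegrable (fun u : ℝ => u ^ (k-1) * (1-u) ^ (k-1)) volume 0 (1/2) := by
      refine (intervalIntegral.intervalIntegrable_rpow' hk1).mul_continuousOn ?_
      refine ContinuousOn.rpow_const (by fun_prop) ?_
      intro u hu
      rw [Set.uIcc_of_le (by norm_num)] at hu
      left; intro h; have := hu.2; nlinarith [hu.1, hu.2]
    have h2 : IntervalIntegrable (fun u : ℝ => u ^ (k-1) * (1-u) ^ (k-1)) volume (1/2) 1 := by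
      have hb : IntervalIntegrable (fun u : ℝ => (1-u) ^ (k-1)) volume (1/2) 1 := by
        have := (intervalIntegral.intervalIntegrable_rpow' (a := 1/2) (b := 0) hk1).comp_sub_left 1
        norm_num at this; exact this
      refine hb.continuousOn_mul ?_
      refine ContinuousOn.rpow_const (by fun_prop) ?_
      intro u hu
      rw [Set.uIcc_of_le (by norm_num)] at hu
      left; intro h; nlinarith [hu.1, hu.2]
    exact h1.trans h2
  refine ⟨hint, ?_⟩
  have hre : 0 < Complex.re k := by simpa using hk
  have hβ := Complex.Gamma_mul_Gamma_eq_betaIntegral hre hre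
  have hofreal : Complex.betaIntegral k k = ((∫ u in (0:ℝ)..1, u ^ (k-1) * (1-u) ^ (k-1) : ℝ) : ℂ) := by
    rw [Complex.betaIntegral, ← intervalIntegral.integral_ofReal]
    refine intervalIntegral.integral_congr ?_
    intro u hu
    rw [Set.uIcc_of_le (by norm_num)] at hu
    have h1 : ((u : ℂ)) ^ ((k:ℂ) - 1) = ((u ^ (k-1) : ℝ) : ℂ) := by
      rw [Complex.ofReal_cpow hu.1]; push_cast; ring_nf
    have h2 : (1 - (u:ℂ)) ^ ((k:ℂ) - 1) = (((1-u) ^ (k-1) : ℝ) : ℂ) := by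
      rw [show (1 - (u:ℂ)) = (((1:ℝ)-u : ℝ) : ℂ) by push_cast; ring,
        Complex.ofReal_cpow (by linarith [hu.2])]
      push_cast; ring_nf
    simp [h1, h2]
  rw [hofreal, show (k:ℂ) + k = ((2*k:ℝ):ℂ) by push_cast; ring] at hβ
  rw [Complex.Gamma_ofReal, Complex.Gamma_ofReal] at hβ
  have h2k : Real.Gamma (2*k) ≠ 0 := (Real.Gamma_pos_of_pos (by linarith)).ne'
  have : Real.Gamma k * Real.Gamma k
      = Real.Gamma (2*k) * ∫ u in (0:ℝ)..1, u ^ (k-1) * (1-u) ^ (k-1) := by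
    exact_mod_cast hβ
  field_simp [this]
  rw [mul_comm k 2]; linear_combination -this

lemma halfInt (k p q : ℝ) (hk : 0 < k) (hp : 0 ≤ p) (hpq : p < q) :
    IntegrableOn (fun z => ((z^2 - p^2) * (q^2 - z^2)) ^ (k-1) * z) (Set.Ioo p q) volume ∧
    ∫ z in p..q, ((z^2 - p^2) * (q^2 - z^2)) ^ (k-1) * z
      = (q^2 - p^2) ^ (2*k-1) * (Real.Gamma k * Real.Gamma k) / (2 * Real.Gamma (2*k)) := by
  obtain ⟨hbI, hbV⟩ := betaInt k hk
  set c : ℝ := q^2 - p^2 with hcdef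
  have hq : 0 < q := lt_of_le_of_lt hp hpq
  have hc : 0 < c := by nlinarith
  set f : ℝ → ℝ := fun z => (z^2 - p^2) / c with hfdef
  set f' : ℝ → ℝ := fun z => 2*z / c with hf'def
  set g : ℝ → ℝ := fun u => (c^2 * (u * (1-u))) ^ (k-1) * (c/2) with hgdef
  set h : ℝ → ℝ := fun z => ((z^2 - p^2) * (q^2 - z^2)) ^ (k-1) * z with hhdef
  have heq : ∀ z, g (f z) * f' z = h z := by
    intro z
    have hbase : c^2 * (f z * (1 - f z)) = (z^2 - p^2) * (q^2 - z^2) := by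
      simp only [hfdef]; field_simp; ring
    simp only [hgdef, hhdef, hf'def, hbase]
    field_simp
  have hderivAt : ∀ z : ℝ, HasDerivAt f (f' z) z := by
    intro z
    simpa [hfdef, hf'def] using ((hasDerivAt_pow 2 z).sub_const (p^2)).div_const c
  have hgIcc : IntegrableOn g (Icc (0:ℝ) 1) volume := by
    have h1 : IntegrableOn (fun u : ℝ => u ^ (k-1) * (1-u) ^ (k-1)) (Icc (0:ℝ) 1) volume := by
      rw [integrableOn_Icc_iff_integrableOn_Ioc]
      simpa [intervalIntegrable_iff_integrableOn_Ioc_of_le (by norm_num : (0:ℝ) ≤ 1)] using hbI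
    refine IntegrableOn.congr_fun (h1.const_mul ((c^2)^(k-1) * (c/2))) ?_ measurableSet_Icc
    intro u hu
    simp only [hgdef]
    rw [Real.mul_rpow (by positivity) (mul_nonneg hu.1 (by linarith [hu.2])),
      Real.mul_rpow hu.1 (by linarith [hu.2])]
    ring
  have himg : ∀ z ∈ Ioo p q, f z ∈ Ioo (0:ℝ) 1 := by
    intro z hz
    constructor
    · apply div_pos (by nlinarith [hz.1, hz.2]) hc
    · rw [div_lt_one hc]; nlinarith [hz.1, hz.2]
  have hinj : InjOn f (Ioo p q) := by
    intro a ha b hb hab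
    have h2 : a^2 = b^2 := by
      simp only [hfdef] at hab; have := mul_right_cancel₀ (inv_ne_zero hc.ne') (by simpa only [div_eq_mul_inv] using hab); linarith
    nlinarith [ha.1, hb.1]
  have hIoo : IntegrableOn h (Ioo p q) volume := by
    have hgI' : IntegrableOn g (f '' Ioo p q) volume :=
      hgIcc.mono_set (by rintro _ ⟨z, hz, rfl⟩; exact Ioo_subset_Icc_self (himg z hz))
    have := (integrableOn_image_iff_integrableOn_abs_deriv_smul measurableSet_Ioo
      (fun z _ => (hderivAt z).hasDerivWithinAt) hinj g).mp hgI'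
    refine this.congr_fun ?_ measurableSet_Ioo
    intro z hz
    have hz0 : 0 < z := lt_of_le_of_lt hp hz.1
    show |f' z| • g (f z) = h z
    have hf'pos : 0 < f' z := by simp only [hf'def]; positivity
    rw [smul_eq_mul, abs_of_pos hf'pos, mul_comm]
    exact heq z
  refine ⟨hIoo, ?_⟩
  have hIcc : IntegrableOn h (Icc p q) volume := by
    rwa [integrableOn_Icc_iff_integrableOn_Ioo]
  have hsub := integral_comp_mul_deriv''' (a := p) (b := q) (f := f) (f' := f') (g := g)
    (by fun_prop)
    (fun z hz => by
      rw [min_eq_left hpq.le, max_eq_right hpq.le] at hz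
      exact (hderivAt z).hasDerivWithinAt)
    (by
      rw [min_eq_left hpq.le, max_eq_right hpq.le]
      refine ContinuousOn.mono ?_ (by rintro _ ⟨z, hz, rfl⟩; exact himg z hz)
      refine ContinuousOn.mul (ContinuousOn.rpow_const (by fun_prop) ?_) continuousOn_const
      intro u hu
      left
      exact ne_of_gt (mul_pos (pow_pos hc 2) (mul_pos hu.1 (by linarith [hu.2]))))
    (by
      refine hgIcc.mono_set ?_
      rw [uIcc_of_le hpq.le]
      rintro _ ⟨z, hz, rfl⟩
      constructor
      · apply div_nonneg (by nlinarith [hz.1, hz.2]) hc.le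
      · rw [div_le_one hc]; nlinarith [hz.1, hz.2])
    (by
      rw [uIcc_of_le hpq.le]
      exact hIcc.congr_fun (fun z _ => (heq z).symm) measurableSet_Icc)
  have hfp : f p = 0 := by simp [hfdef]
  have hfq : f q = 1 := by simp only [hfdef]; rw [← hcdef]; exact div_self hc.ne'
  rw [hfp, hfq] at hsub
  have hL : (∫ z in p..q, (g ∘ f) z * f' z) = ∫ z in p..q, h z :=
    intervalIntegral.integral_congr (fun z _ => heq z)
  have hR : (∫ u in (0:ℝ)..1, g u)
      = (c^2)^(k-1) * (c/2) * (Real.Gamma k * Real.Gamma k / Real.Gamma (2*k)) := by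
    rw [← hbV, ← intervalIntegral.integral_const_mul]
    refine intervalIntegral.integral_congr ?_
    intro u hu
    rw [uIcc_of_le (by norm_num : (0:ℝ) ≤ 1)] at hu
    simp only [hgdef]
    rw [Real.mul_rpow (by positivity) (mul_nonneg hu.1 (by linarith [hu.2])),
      Real.mul_rpow hu.1 (by linarith [hu.2])]
    ring
  have hcpow : (c^2)^(k-1) * (c/2) = c^(2*k-1) / 2 := by
    rw [← Real.rpow_natCast c 2, ← Real.rpow_mul hc.le]
    rw [show c / 2 = c^(1:ℝ) / 2 by rw [Real.rpow_one]]
    rw [div_eq_mul_inv, div_eq_mul_inv, ← mul_assoc, ← Real.rpow_add hc]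
    norm_num
    rw [show (2:ℝ) * (k-1) + 1 = 2*k-1 by ring]
  rw [hL, hR, hcpow] at hsub
  rw [hsub]; ring

lemma finalArith (k a t : ℝ) (hk : 0 < k) (ha : 0 < a) (ht : 0 < t) :
    2 ^ (1 - 2 * (k - 1/2)) * Real.Gamma (k + 1/2) /
        (Real.sqrt Real.pi * Real.Gamma k) / (a*t)^(2*k-1)
      * ((4*(a*t)) ^ (2*k-1) * (Real.Gamma k * Real.Gamma k) / (2 * Real.Gamma (2*k))) = 1 := by
  have hπ : 0 < Real.sqrt Real.pi := Real.sqrt_pos.mpr Real.pi_pos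
  have hΓk : 0 < Real.Gamma k := Real.Gamma_pos_of_pos hk
  have hΓk2 : 0 < Real.Gamma (k+1/2) := Real.Gamma_pos_of_pos (by linarith)
  have hΓ2k : 0 < Real.Gamma (2*k) := Real.Gamma_pos_of_pos (by linarith)
  have hat : (0:ℝ) < (a*t)^(2*k-1) := Real.rpow_pos_of_pos (by positivity) _
  have hdup := Real.Gamma_mul_Gamma_add_half k
  have h2 : (2:ℝ)^(2:ℝ) = 4 := by
    rw [show (2:ℝ) = ((2:ℕ):ℝ) by norm_num]
    rw [Real.rpow_natCast]; norm_num
  have h4 : (4*(a*t)) ^ (2*k-1) = 2^(2*(2*k-1)) * (a*t)^(2*k-1) := by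
    rw [Real.mul_rpow (by norm_num) (by positivity)]
    congr 1
    rw [Real.rpow_mul (by norm_num : (0:ℝ) ≤ 2), h2]
  have key : (2:ℝ)^(1-2*(k-1/2)) * 2^(2*(2*k-1)) * 2^(1-2*k) = 2 := by
    rw [← Real.rpow_add two_pos, ← Real.rpow_add two_pos,
      show 1-2*(k-1/2) + 2*(2*k-1) + (1-2*k) = (1:ℝ) by ring, Real.rpow_one]
  rw [h4]
  set A : ℝ := 2^(1-2*(k-1/2)) with hA
  set B : ℝ := 2^(2*(2*k-1)) with hB
  set Cc : ℝ := 2^(1-2*k) with hC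
  set G1 : ℝ := Real.Gamma k
  set G2 : ℝ := Real.Gamma (k+1/2)
  set G3 : ℝ := Real.Gamma (2*k)
  set S : ℝ := Real.sqrt Real.pi
  set P : ℝ := (a*t)^(2*k-1)
  field_simp
  linear_combination (A*B) * hdup + (G3*S) * key

/-- the rank-one spherical mean measures are probability measures:
for `k > 0`, `x ≠ 0`, `t > 0`, the symmetrization `σ^k_{x,t} = (μ^k_{x,t} + μ^k_{x,−t})/2`
has nonnegative density of total integral `1`, i.e. it is a probability measure on `ℝ`. -/
theorem rankOne_spherical_mean_probability (k : ℝ) (hk : 0 < k)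
    (x : ℝ) (hx : x ≠ 0) (t : ℝ) (ht : 0 < t) :
    (∀ z : ℝ, 0 ≤ rankOneSphMeanDens k x t z)
    ∧ ∫ z : ℝ, rankOneSphMeanDens k x t z = 1 := by
  have ha : 0 < |x| := abs_pos.mpr hx
  set a : ℝ := |x| with hadef
  set p : ℝ := |a - t| with hpdef
  set q : ℝ := a + t with hqdef
  have hp : 0 ≤ p := abs_nonneg _
  have hq : 0 < q := by positivity
  have hpq : p < q := by
    rw [hpdef, abs_lt]; constructor <;> [linarith; linarith]
  have hat : |t| = t := abs_of_pos ht
  set K : ℝ → ℝ := besselProdKernel (k - 1/2) a t with hKdef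
  set Cγ : ℝ := 2 ^ (1 - 2 * (k - 1/2)) * Real.Gamma ((k - 1/2) + 1) /
      (Real.sqrt Real.pi * Real.Gamma ((k - 1/2) + 1/2)) with hCγdef
  set fn : ℝ → ℝ := fun z => Cγ * ((z ^ 2 - (a - t) ^ 2) * ((a + t) ^ 2 - z ^ 2)) ^ ((k - 1/2) - 1/2) /
      (a * t * z) ^ (2 * (k - 1/2)) with hfndef
  have hKind : ∀ s, K s = Set.indicator (Set.Icc p q) fn s := fun s => rfl
  set E : ℝ → ℝ := fun z => K |z| * |z| ^ (2 * k) with hEdef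
  set r : ℝ → ℝ := fun z => ((z + x) ^ 2 - t ^ 2) / (4 * z * x) with hrdef
  -- pointwise identity
  have hfE : ∀ z, rankOneSphMeanDens k x t z = E z * r z := by
    intro z
    by_cases hz : z = 0
    · subst hz
      simp [rankOneSphMeanDens, rankOneDens, hEdef, hrdef,
        Real.zero_rpow (show (2*k:ℝ) ≠ 0 by positivity)]
    · simp only [rankOneSphMeanDens, rankOneDens, sigCoeff, abs_neg, hat, hEdef, hrdef]
      rw [← hadef, ← hKdef]
      rw [if_pos (show x ≠ 0 ∧ t ≠ 0 from ⟨hx, ht.ne'⟩),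
        if_pos (show z ≠ 0 ∧ x ≠ 0 from ⟨hz, hx⟩),
        if_pos (show z ≠ 0 ∧ t ≠ 0 from ⟨hz, ht.ne'⟩),
        if_pos (show x ≠ 0 ∧ -t ≠ 0 from ⟨hx, neg_ne_zero.mpr ht.ne'⟩),
        if_pos (show z ≠ 0 ∧ x ≠ 0 from ⟨hz, hx⟩),
        if_pos (show z ≠ 0 ∧ -t ≠ 0 from ⟨hz, neg_ne_zero.mpr ht.ne'⟩)]
      rw [← mul_add, mul_div_assoc]
      congr 1
      field_simp
      ring
  -- support of K
  have hsuppK : ∀ s, K s ≠ 0 → s ∈ Set.Icc p q := by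
    intro s hs
    by_contra hns
    exact hs (by rw [hKind s, Set.indicator_of_notMem hns])
  have hπ : 0 < Real.sqrt Real.pi := Real.sqrt_pos.mpr Real.pi_pos
  have hCγ : 0 < Cγ := by
    rw [hCγdef]
    have h1 : (0:ℝ) < 2 ^ (1 - 2 * (k - 1/2)) := Real.rpow_pos_of_pos two_pos _
    have h2 : 0 < Real.Gamma ((k - 1/2) + 1) := Real.Gamma_pos_of_pos (by linarith)
    have h3 : 0 < Real.Gamma ((k - 1/2) + 1/2) := Real.Gamma_pos_of_pos (by linarith)
    positivity
  have hK0 : ∀ s, 0 ≤ K s := by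
    intro s
    rw [hKind s]
    apply Set.indicator_nonneg
    intro u hu
    have hu0 : 0 ≤ u := le_trans hp hu.1
    have hb1 : 0 ≤ u ^ 2 - (a - t) ^ 2 := by
      nlinarith [sq_abs (a - t), hu.1, hu0, hp]
    have hb2 : 0 ≤ (a + t) ^ 2 - u ^ 2 := by nlinarith [hu.2, hu0]
    have hnum : (0:ℝ) ≤ ((u ^ 2 - (a - t) ^ 2) * ((a + t) ^ 2 - u ^ 2)) ^ ((k - 1/2) - 1/2) :=
      Real.rpow_nonneg (mul_nonneg hb1 hb2) _
    have hd : (0:ℝ) ≤ (a * t * u) ^ (2 * (k - 1/2)) :=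
      Real.rpow_nonneg (by positivity) _
    exact div_nonneg (mul_nonneg hCγ.le hnum) hd
  have hE0 : ∀ z, 0 ≤ E z := fun z =>
    mul_nonneg (hK0 _) (Real.rpow_nonneg (abs_nonneg _) _)
  have hr0 : ∀ z, z ≠ 0 → |z| ∈ Set.Icc p q → 0 ≤ r z := by
    intro z hz hmem
    have hz1 : p ≤ |z| := hmem.1
    have hz2 : |z| ≤ q := hmem.2
    have hta : t - a ≤ p := by
      rw [hpdef, abs_sub_comm]; exact le_abs_self _
    have hat' : a - t ≤ p := le_abs_self _
    rw [hrdef, div_nonneg_iff]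
    rcases lt_or_gt_of_ne (mul_ne_zero hz hx) with hzx | hzx
    · right
      have habs : |z| * |x| = -(z * x) := by
        rw [← abs_mul]; exact abs_of_neg hzx
      constructor
      · have hsq : (|z| - a) ^ 2 ≤ t ^ 2 := by
          apply sq_le_sq' <;> [linarith; linarith]
        nlinarith [sq_abs z, sq_abs x, habs]
      · linarith
    · left
      have habs : |z| * |x| = z * x := by
        rw [← abs_mul]; exact abs_of_pos hzx
      constructor
      · have h1 : t ≤ |z| + a := by linarith
        have hsq : t ^ 2 ≤ (|z| + a) ^ 2 := by nlinarith [abs_nonneg z]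
        nlinarith [sq_abs z, sq_abs x, habs]
      · linarith
  have hrsum : ∀ z, z ≠ 0 → r z + r (-z) = 1 := by
    intro z hz
    rw [hrdef]
    field_simp
    ring
  have hEneg : ∀ z, E (-z) = E z := by intro z; simp only [hEdef, abs_neg]
  have hr1 : ∀ z, z ≠ 0 → |z| ∈ Set.Icc p q → r z ≤ 1 := by
    intro z hz hmem
    have h1 : 0 ≤ r (-z) := by
      apply hr0 (-z) (neg_ne_zero.mpr hz)
      rwa [abs_neg]
    have := hrsum z hz
    linarith
  have hnonneg : ∀ z : ℝ, 0 ≤ rankOneSphMeanDens k x t z := by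
    intro z
    rw [hfE z]
    by_cases hz : z = 0
    · subst hz
      have : r 0 = 0 := by rw [hrdef]; simp
      rw [this, mul_zero]
    · by_cases hKz : K |z| = 0
      · have : E z = 0 := by rw [hEdef]; simp [hKz]
        rw [this, zero_mul]
      · exact mul_nonneg (hE0 z) (hr0 z hz (hsuppK _ hKz))
  refine ⟨hnonneg, ?_⟩
  have hbound : ∀ z, ‖E z * r z‖ ≤ E z := by
    intro z
    by_cases hz : z = 0
    · have : r 0 = 0 := by rw [hrdef]; simp
      subst hz
      rw [this, mul_zero, norm_zero]
      exact hE0 0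
    · by_cases hKz : K |z| = 0
      · have : E z = 0 := by rw [hEdef]; simp [hKz]
        rw [this, zero_mul, norm_zero]
      · have h0 := hr0 z hz (hsuppK _ hKz)
        have h1 := hr1 z hz (hsuppK _ hKz)
        rw [Real.norm_eq_abs, abs_of_nonneg (mul_nonneg (hE0 z) h0)]
        nlinarith [hE0 z]
  -- measurability
  have hfnmeas : Measurable fn := by
    rw [hfndef]
    apply Measurable.div
    · exact measurable_const.mul
        (((measurable_id.pow_const 2 |>.sub measurable_const).mul
          (measurable_const.sub (measurable_id.pow_const 2))).pow measurable_const)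
    · exact (measurable_id.const_mul (a*t)).pow measurable_const
  have hKmeas : Measurable K := by
    have : K = Set.indicator (Set.Icc p q) fn := funext hKind
    rw [this]
    exact hfnmeas.indicator measurableSet_Icc
  have hmeasE : Measurable E := by
    rw [hEdef]
    exact (hKmeas.comp measurable_abs).mul (measurable_abs.pow measurable_const)
  have hmeasr : Measurable r := by
    rw [hrdef]
    apply Measurable.div <;> fun_prop
  -- integrability of E
  obtain ⟨hIoo, hval⟩ := halfInt k p q hk hp hpq
  set C : ℝ := Cγ / (a*t)^(2*k-1) with hCdef
  set h0 : ℝ → ℝ := fun z => ((z^2 - p^2) * (q^2 - z^2)) ^ (k-1) * z with hh0def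
  have hEft : ∀ z ∈ Set.Ioo p q, E z = C * h0 z := by
    intro z hz
    have hz0 : 0 < z := lt_of_le_of_lt hp hz.1
    have hzabs : |z| = z := abs_of_pos hz0
    rw [hEdef]
    simp only [hzabs]
    rw [hKind z, Set.indicator_of_mem (Set.Ioo_subset_Icc_self hz)]
    simp only [hfndef]
    have hsq : (a - t) ^ 2 = p ^ 2 := (sq_abs _).symm
    have hexp : (k - 1/2) - 1/2 = k - 1 := by ring
    have h2a : 2 * (k - 1/2) = 2*k - 1 := by ring
    rw [hsq, hexp, h2a]
    have hmul : (a * t * z) ^ (2*k-1) = (a*t)^(2*k-1) * z^(2*k-1) :=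
      Real.mul_rpow (by positivity) hz0.le
    have hzz : z ^ (2*k) = z^(2*k-1) * z := by
      rw [← Real.rpow_add_one hz0.ne' (2*k-1)]
      norm_num
    rw [hmul, hzz]
    simp only [hh0def, hCdef]
    have hne1 : (a*t)^(2*k-1) ≠ 0 := (Real.rpow_pos_of_pos (by positivity) _).ne'
    have hne2 : z^(2*k-1) ≠ 0 := (Real.rpow_pos_of_pos hz0 _).ne'
    field_simp
    ring
  have hEIoo : IntegrableOn E (Set.Ioo p q) volume := by
    refine IntegrableOn.congr_fun (hIoo.const_mul C) ?_ measurableSet_Ioo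
    intro z hz
    exact (hEft z hz).symm
  have hEIcc : IntegrableOn E (Set.Icc p q) volume :=
    (integrableOn_Icc_iff_integrableOn_Ioo).mpr hEIoo
  have hEIccneg : IntegrableOn E (Set.Icc (-q) (-p)) volume := by
    rw [← (Measure.measurePreserving_neg (volume : Measure ℝ)).integrableOn_comp_preimage
        (Homeomorph.neg ℝ).measurableEmbedding]
    simp only [Function.comp_def, neg_preimage, neg_Icc, neg_neg]
    exact hEIcc.congr_fun (fun z _ => (hEneg z).symm) measurableSet_Icc
  set S : Set ℝ := Set.Icc (-q) (-p) ∪ Set.Icc p q with hSdef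
  have hSmeas : MeasurableSet S := (measurableSet_Icc).union measurableSet_Icc
  have hsuppE : Function.support E ⊆ S := by
    intro z hz
    have hKz : K |z| ≠ 0 := by
      intro h; apply hz; rw [hEdef]; simp [h]
    have hmem := hsuppK _ hKz
    rcases le_or_gt 0 z with h0 | h0
    · right; rwa [abs_of_nonneg h0] at hmem
    · left
      rw [abs_of_neg h0] at hmem
      exact ⟨by linarith [hmem.2], by linarith [hmem.1]⟩
  have hEint : Integrable E volume := by
    rw [← Set.indicator_eq_self.mpr hsuppE, integrable_indicator_iff hSmeas]
    exact hEIccneg.union hEIcc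
  have hfint : Integrable (fun z => E z * r z) volume := by
    refine Integrable.mono' hEint ((hmeasE.mul hmeasr).aestronglyMeasurable) ?_
    exact ae_of_all _ hbound
  -- compute ∫ E
  have hIic : ∫ z in Set.Iic (0:ℝ), E z = ∫ z in Set.Ioi (0:ℝ), E z := by
    have h1 : ∫ z in Set.Iic (0:ℝ), E z = ∫ z in Set.Iic (0:ℝ), E (-z) :=
      setIntegral_congr_fun measurableSet_Iic (fun z _ => (hEneg z).symm)
    rw [h1, integral_comp_neg_Iic, neg_zero]
  have htot : ∫ z, E z = 2 * ∫ z in Set.Ioi (0:ℝ), E z := by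
    rw [← integral_add_compl (measurableSet_Ioi (a := (0:ℝ))) hEint, compl_Ioi, hIic]
    ring
  have hIoi : ∫ z in Set.Ioi (0:ℝ), E z = C * ∫ z in p..q, h0 z := by
    have e1 : ∫ z in Set.Ioi (0:ℝ), E z
        = ∫ z in Set.Ioi (0:ℝ), Set.indicator (Set.Icc p q) (fun w => fn w * w ^ (2*k)) z := by
      refine setIntegral_congr_fun measurableSet_Ioi (fun z hz => ?_)
      have hzabs : |z| = z := abs_of_pos hz
      rw [hEdef]
      simp only [hzabs]
      rw [hKind z]
      by_cases hmem : z ∈ Set.Icc p q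
      · rw [Set.indicator_of_mem hmem, Set.indicator_of_mem hmem]
      · rw [Set.indicator_of_notMem hmem, Set.indicator_of_notMem hmem, zero_mul]
    rw [e1, setIntegral_indicator measurableSet_Icc]
    have e2 : (Set.Ioi (0:ℝ) ∩ Set.Icc p q : Set ℝ) =ᵐ[volume] (Set.Ioo p q : Set ℝ) := by
      have hss : Set.Ioi (0:ℝ) ∩ Set.Ioo p q = Set.Ioo p q :=
        Set.inter_eq_right.mpr (fun z hz => lt_of_le_of_lt hp hz.1)
      have h1 : (Set.Ioi (0:ℝ) ∩ Set.Icc p q : Set ℝ) =ᵐ[volume] (Set.Ioi (0:ℝ) ∩ Set.Ioo p q : Set ℝ) :=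
        MeasureTheory.ae_eq_set_inter (ae_eq_refl _)
          (MeasureTheory.Ioo_ae_eq_Icc (μ := (volume : Measure ℝ)) (a := p) (b := q)).symm
      rw [hss] at h1
      exact h1
    rw [setIntegral_congr_set e2]
    have e3 : ∫ z in Set.Ioo p q, fn z * z ^ (2*k) = ∫ z in Set.Ioo p q, C * h0 z := by
      refine setIntegral_congr_fun measurableSet_Ioo (fun z hz => ?_)
      have hz0 : 0 < z := lt_of_le_of_lt hp hz.1
      have hE := hEft z hz
      rw [hEdef] at hE
      simp only [abs_of_pos hz0] at hE
      rw [hKind z, Set.indicator_of_mem (Set.Ioo_subset_Icc_self hz)] at hE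
      exact hE
    rw [e3, MeasureTheory.integral_const_mul]
    congr 1
    rw [intervalIntegral.integral_of_le hpq.le, integral_Ioc_eq_integral_Ioo]
  -- symmetrization
  have hae0 : ∀ᵐ (z : ℝ), z ≠ (0:ℝ) := by
    refine ae_iff.mpr ?_
    simp only [ne_eq, not_not]
    exact measure_singleton 0
  have hdouble : (∫ z, E z * r z) = (∫ z, E z) / 2 := by
    have hneg : ∫ z, E (-z) * r (-z) = ∫ z, E z * r z :=
      integral_neg_eq_self (fun z => E z * r z) volume
    have hsum : (∫ z, E z * r z) + (∫ z, E (-z) * r (-z)) = ∫ z, E z := by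
      rw [← integral_add hfint hfint.comp_neg]
      refine integral_congr_ae ?_
      filter_upwards [hae0] with z hz
      rw [hEneg z, ← mul_add, hrsum z hz, mul_one]
    linarith [hneg, hsum]
  calc ∫ z : ℝ, rankOneSphMeanDens k x t z = ∫ z, E z * r z :=
        integral_congr_ae (ae_of_all _ (fun z => hfE z))
    _ = (∫ z, E z) / 2 := hdouble
    _ = C * ∫ z in p..q, h0 z := by rw [htot, hIoi]; ring
    _ = 1 := by
        rw [hh0def] at hval ⊢
        rw [hval]
        have hq2 : q^2 - p^2 = 4*(a*t) := by
          rw [hqdef, hpdef, sq_abs]; ring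
        rw [hq2, hCdef]
        have hCγeq : Cγ = 2 ^ (1 - 2 * (k - 1/2)) * Real.Gamma (k + 1/2) /
            (Real.sqrt Real.pi * Real.Gamma k) := by
          rw [hCγdef, show (k - 1/2) + 1 = k + 1/2 by ring, show (k - 1/2) + 1/2 = k by ring]
        rw [hCγeq]
        exact finalArith k a t hk ha ht
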